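/- arXiv:math/0106111 — 3 statements merged into one kernel-verified Lean document; each statement's English description precedes it below -/
import Mathlib

section
/- Let Γ be a lattice in ℝⁿ and S ⊆ Γ a subset with existing autocorrelation coefficients ν_S(z). If dens(S) = dens(Γ)/2, then S and its complement S' = Γ \ S are homometric, i.e., ν_{S'}(z) = ν_S(z) for all z ∈ ℝⁿ. -/
open MeasureTheory Filter Metric

/-- `DensTo A d` : the set `A ⊆ ℝⁿ` has natural density `d` with respect to
increasing balls around the origin. -/
def DensTo {n : ℕ} (A : Set (EuclideanSpace ℝ (Fin n))) (d : ℝ) : Prop :=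
  Tendsto (fun r : ℝ =>
      (Nat.card ↥(A ∩ ball (0 : EuclideanSpace ℝ (Fin n)) r) : ℝ) /
        (volume (ball (0 : EuclideanSpace ℝ (Fin n)) r)).toReal)
    atTop (nhds d)

namespace ComplHomAux

variable {n : ℕ}

/-- Abbreviation for the volume of the ball of radius `r`. -/
noncomputable def V (n : ℕ) (r : ℝ) : ℝ :=
  (volume (ball (0 : EuclideanSpace ℝ (Fin n)) r)).toReal

lemma V_pos {r : ℝ} (hr : 0 < r) : 0 < V n r :=
  ENNReal.toReal_pos (measure_ball_pos _ _ hr).ne' measure_ball_lt_top.ne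

lemma V_eq {r : ℝ} (hr : 0 < r) : V n r = r ^ n * V n 1 := by
  unfold V
  rw [Measure.addHaar_ball_of_pos _ _ hr, ENNReal.toReal_mul,
    ENNReal.toReal_ofReal (pow_nonneg hr.le _), finrank_euclideanSpace, Fintype.card_fin]

lemma densTo_iff (A : Set (EuclideanSpace ℝ (Fin n))) (d : ℝ) :
    DensTo A d ↔
      Tendsto (fun r : ℝ => ((A ∩ ball (0 : EuclideanSpace ℝ (Fin n)) r).ncard : ℝ) / V n r)
        atTop (nhds d) := by
  unfold DensTo V
  simp only [Nat.card_coe_set_eq]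

lemma tendsto_V_ratio (c : ℝ) :
    Tendsto (fun r : ℝ => V n (r + c) / V n r) atTop (nhds 1) := by
  have h0 : Tendsto (fun r : ℝ => 1 + c / r) atTop (nhds 1) := by
    have := tendsto_const_nhds (x := c) (f := atTop (α := ℝ)) |>.div_atTop tendsto_id
    simpa using (tendsto_const_nhds (x := (1:ℝ))).add this
  have h1 : Tendsto (fun r : ℝ => ((r + c) / r) ^ n) atTop (nhds 1) := by
    have h2 : Tendsto (fun r : ℝ => (r + c) / r) atTop (nhds 1) := by
      refine h0.congr' ?_
      filter_upwards [eventually_gt_atTop 0] with r hr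
      rw [add_div, div_self hr.ne']
    simpa using h2.pow n
  refine h1.congr' ?_
  filter_upwards [eventually_gt_atTop (max 0 (-c))] with r hr
  have hr0 : 0 < r := lt_of_le_of_lt (le_max_left _ _) hr
  have hrc : 0 < r + c := by
    have := lt_of_le_of_lt (le_max_right _ _) hr; linarith
  rw [V_eq hrc, V_eq hr0, div_pow, mul_div_mul_right _ _ (V_pos one_pos).ne']

/-- The translate of a set (with locally finite intersections with balls) has the
same density. -/
lemma densTo_translate (A : Set (EuclideanSpace ℝ (Fin n)))
    (hfin : ∀ r : ℝ, (A ∩ ball (0 : EuclideanSpace ℝ (Fin n)) r).Finite)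
    {d : ℝ} (hd : DensTo A d) (z : EuclideanSpace ℝ (Fin n)) :
    DensTo ((fun x => z + x) '' A) d := by
  rw [densTo_iff] at hd ⊢
  set c : ℝ := ‖z‖ with hc
  -- the count of the translate is a count of `A` in a shifted ball
  have key : ∀ r : ℝ,
      (((fun x => z + x) '' A) ∩ ball (0 : EuclideanSpace ℝ (Fin n)) r).ncard
        = (A ∩ ball (-z) r).ncard := by
    intro r
    rw [← Set.ncard_image_of_injective (A ∩ ball (-z) r) (add_right_injective z)]
    congr 1
    ext x
    constructor
    · rintro ⟨hx1, hx2⟩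
      obtain ⟨y, hy, rfl⟩ := hx1
      refine ⟨y, ⟨hy, ?_⟩, rfl⟩
      rw [mem_ball] at hx2 ⊢
      rw [dist_eq_norm] at hx2 ⊢
      simpa [add_comm, sub_neg_eq_add] using hx2
    · rintro ⟨y, ⟨hy1, hy2⟩, rfl⟩
      refine ⟨⟨y, hy1, rfl⟩, ?_⟩
      rw [mem_ball, dist_eq_norm] at hy2 ⊢
      simpa [add_comm, sub_neg_eq_add] using hy2
  have hsub1 : ∀ r : ℝ, A ∩ ball (0 : EuclideanSpace ℝ (Fin n)) (r + (-c)) ⊆ A ∩ ball (-z) r := by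
    intro r x ⟨hx1, hx2⟩
    refine ⟨hx1, ?_⟩
    rw [mem_ball_zero_iff] at hx2
    rw [mem_ball, dist_eq_norm, sub_neg_eq_add]
    calc ‖x + z‖ ≤ ‖x‖ + ‖z‖ := norm_add_le _ _
      _ < r + (-c) + c := by linarith
      _ = r := by ring
  have hsub2 : ∀ r : ℝ, A ∩ ball (-z) r ⊆ A ∩ ball (0 : EuclideanSpace ℝ (Fin n)) (r + c) := by
    intro r x ⟨hx1, hx2⟩
    refine ⟨hx1, ?_⟩
    rw [mem_ball, dist_eq_norm, sub_neg_eq_add] at hx2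
    rw [mem_ball_zero_iff]
    calc ‖x‖ = ‖x + z + -z‖ := by rw [add_neg_cancel_right]
      _ ≤ ‖x + z‖ + ‖z‖ := by simpa using norm_add_le (x + z) (-z)
      _ < r + c := by linarith
  -- auxiliary : density along shifted radii
  have shifted : ∀ e : ℝ,
      Tendsto (fun r : ℝ =>
        ((A ∩ ball (0 : EuclideanSpace ℝ (Fin n)) (r + e)).ncard : ℝ) / V n r)
        atTop (nhds d) := by
    intro e
    have h1 : Tendsto (fun r : ℝ =>
        ((A ∩ ball (0 : EuclideanSpace ℝ (Fin n)) (r + e)).ncard : ℝ) / V n (r + e))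
        atTop (nhds d) :=
      hd.comp (tendsto_atTop_add_const_right atTop e tendsto_id)
    have h2 := (h1.mul (tendsto_V_ratio (n := n) e))
    rw [mul_one] at h2
    refine h2.congr' ?_
    filter_upwards [eventually_gt_atTop (max 0 (-e))] with r hr
    have hre : 0 < r + e := by
      have := lt_of_le_of_lt (le_max_right _ _) hr; linarith
    rw [div_mul_div_comm, mul_comm (V n (r + e)) (V n r),
      mul_div_mul_right _ _ (V_pos hre).ne']
  -- squeeze
  refine tendsto_of_tendsto_of_tendsto_of_le_of_le' (shifted (-c)) (shifted c) ?_ ?_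
  · filter_upwards [eventually_gt_atTop 0] with r hr
    rw [key r]
    have hfin' : (A ∩ ball (-z) r).Finite := (hfin (r + c)).subset (hsub2 r)
    have := Set.ncard_le_ncard (hsub1 r) hfin'
    exact div_le_div_of_nonneg_right (by exact_mod_cast this) (V_pos (n := n) hr).le
  · filter_upwards [eventually_gt_atTop 0] with r hr
    rw [key r]
    have := Set.ncard_le_ncard (hsub2 r) (hfin (r + c))
    exact div_le_div_of_nonneg_right (by exact_mod_cast this) (V_pos (n := n) hr).le

end ComplHomAux

open ComplHomAux in
/-- If `S ⊆ Γ` has density half of that of `Γ`, then `S` and its complement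
`S' = Γ \ S` are homometric: `ν_{S'}(z) = ν_S(z)` for all `z ∈ ℝⁿ`. -/
theorem complement_homometric {n : ℕ}
    (b : Module.Basis (Fin n) ℝ (EuclideanSpace ℝ (Fin n)))
    (Γ : Set (EuclideanSpace ℝ (Fin n)))
    (hΓ : Γ = (Submodule.span ℤ (Set.range b) : Submodule ℤ (EuclideanSpace ℝ (Fin n))))
    (S : Set (EuclideanSpace ℝ (Fin n))) (hS : S ⊆ Γ)
    (ν : EuclideanSpace ℝ (Fin n) → ℝ)
    (hν : ∀ z, DensTo (S ∩ ((fun x => z + x) '' S)) (ν z))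
    (dΓ : ℝ) (hdΓ : DensTo Γ dΓ)
    (hhalf : ν 0 = dΓ / 2) :
    ∀ z, DensTo ((Γ \ S) ∩ ((fun x => z + x) '' (Γ \ S))) (ν z) := by
  classical
  subst hΓ
  set L : Submodule ℤ (EuclideanSpace ℝ (Fin n)) := Submodule.span ℤ (Set.range b) with hL
  set Γ : Set (EuclideanSpace ℝ (Fin n)) := (L : Set (EuclideanSpace ℝ (Fin n))) with hΓ
  -- Γ is closed and discrete, hence meets every ball in a finite set
  have hdisc : DiscreteTopology L.toAddSubgroup :=
    inferInstanceAs (DiscreteTopology (Submodule.span ℤ (Set.range b)))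
  have hclosed : IsClosed Γ := by
    have h := AddSubgroup.isClosed_of_discrete (H := L.toAddSubgroup)
    simpa using h
  have hdisc' : DiscreteTopology Γ :=
    inferInstanceAs (DiscreteTopology (Submodule.span ℤ (Set.range b)))
  have hfinΓ : ∀ r : ℝ, (Γ ∩ ball (0 : EuclideanSpace ℝ (Fin n)) r).Finite := by
    intro r
    rw [Set.inter_comm]
    exact Metric.finite_isBounded_inter_isClosed DiscreteTopology.isDiscrete isBounded_ball hclosed
  have hfinS : ∀ r : ℝ, (S ∩ ball (0 : EuclideanSpace ℝ (Fin n)) r).Finite := fun r =>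
    (hfinΓ r).subset (Set.inter_subset_inter_left _ hS)
  -- density of S itself
  have hSdens : DensTo S (dΓ / 2) := by
    have h0 := hν 0
    have himg : (fun x : EuclideanSpace ℝ (Fin n) => (0 : EuclideanSpace ℝ (Fin n)) + x) '' S = S := by
      simp [Set.image_id']
    rw [himg, Set.inter_self, hhalf] at h0
    exact h0
  intro z
  by_cases hz : z ∈ Γ
  · -- main case : z in the lattice
    have hzS : (fun x : EuclideanSpace ℝ (Fin n) => z + x) '' S ⊆ Γ := by
      rintro _ ⟨y, hy, rfl⟩
      exact Submodule.add_mem L (SetLike.mem_coe.mp hz) (SetLike.mem_coe.mp (hS hy))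
    have hUsub : S ∪ (fun x : EuclideanSpace ℝ (Fin n) => z + x) '' S ⊆ Γ := Set.union_subset hS hzS
    -- the complement autocorrelation set
    have hset : (Γ \ S) ∩ ((fun x : EuclideanSpace ℝ (Fin n) => z + x) '' (Γ \ S))
        = Γ \ (S ∪ (fun x : EuclideanSpace ℝ (Fin n) => z + x) '' S) := by
      ext x
      constructor
      · rintro ⟨⟨hxΓ, hxS⟩, y, ⟨hyΓ, hyS⟩, rfl⟩
        refine ⟨hxΓ, ?_⟩
        rintro (h | ⟨w, hw, hwy⟩)
        · exact hxS h
        · have : w = y := by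
            have := hwy
            exact add_left_cancel this
          exact hyS (this ▸ hw)
      · rintro ⟨hxΓ, hxU⟩
        have hxS : x ∉ S := fun h => hxU (Or.inl h)
        have hxzS : x ∉ (fun t : EuclideanSpace ℝ (Fin n) => z + t) '' S := fun h => hxU (Or.inr h)
        refine ⟨⟨hxΓ, hxS⟩, x - z, ⟨⟨?_, ?_⟩, by show z + (x - z) = x; rw [← add_sub_assoc, add_comm, add_sub_cancel_right]⟩⟩
        · exact Submodule.sub_mem L (SetLike.mem_coe.mp hxΓ) (SetLike.mem_coe.mp hz)
        · intro h
          exact hxzS ⟨x - z, h, by show z + (x - z) = x; rw [← add_sub_assoc, add_comm, add_sub_cancel_right]⟩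
    rw [densTo_iff]
    -- limits of the four counting functions
    have hTdens : DensTo ((fun x : EuclideanSpace ℝ (Fin n) => z + x) '' S) (dΓ / 2) :=
      densTo_translate S hfinS hSdens z
    rw [densTo_iff] at hdΓ hSdens hTdens
    have hIdens := hν z
    rw [densTo_iff] at hIdens
    have hcomb := ((hdΓ.sub hSdens).sub hTdens).add hIdens
    have hval : dΓ - dΓ / 2 - dΓ / 2 + ν z = ν z := by ring
    rw [hval] at hcomb
    refine hcomb.congr' ?_
    filter_upwards [] with r
    -- counting identity
    set B := ball (0 : EuclideanSpace ℝ (Fin n)) r with hB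
    have hfA1 : (S ∩ B).Finite := hfinS r
    have hfA2 : (((fun x : EuclideanSpace ℝ (Fin n) => z + x) '' S) ∩ B).Finite :=
      (hfinΓ r).subset (Set.inter_subset_inter_left _ hzS)
    have hfG : (Γ ∩ B).Finite := hfinΓ r
    have hU : (S ∪ (fun x : EuclideanSpace ℝ (Fin n) => z + x) '' S) ∩ B
        = (S ∩ B) ∪ (((fun x : EuclideanSpace ℝ (Fin n) => z + x) '' S) ∩ B) := Set.union_inter_distrib_right _ _ _
    have hI : (S ∩ B) ∩ (((fun x : EuclideanSpace ℝ (Fin n) => z + x) '' S) ∩ B)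
        = (S ∩ ((fun x : EuclideanSpace ℝ (Fin n) => z + x) '' S)) ∩ B := by
      ext x; simp only [Set.mem_inter_iff]; tauto
    have n1 := Set.ncard_union_add_ncard_inter (S ∩ B) (((fun x : EuclideanSpace ℝ (Fin n) => z + x) '' S) ∩ B) hfA1 hfA2
    rw [hI] at n1
    have hDeq : ((Γ \ S) ∩ ((fun x : EuclideanSpace ℝ (Fin n) => z + x) '' (Γ \ S))) ∩ B
        = (Γ ∩ B) \ ((S ∪ (fun x : EuclideanSpace ℝ (Fin n) => z + x) '' S) ∩ B) := by
      rw [hset]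
      ext x
      simp only [Set.mem_inter_iff, Set.mem_diff, Set.mem_union]
      tauto
    have hsub : (S ∪ (fun x : EuclideanSpace ℝ (Fin n) => z + x) '' S) ∩ B ⊆ Γ ∩ B :=
      Set.inter_subset_inter_left _ hUsub
    have n2 := Set.ncard_diff_add_ncard_of_subset hsub hfG
    rw [hDeq]
    -- turn the two natural-number identities into a real identity
    rw [hU] at n2
    have e1 : (((S ∪ (fun x : EuclideanSpace ℝ (Fin n) => z + x) '' S) ∩ B).ncard : ℝ)
        = ((S ∩ B).ncard : ℝ) + (((fun x : EuclideanSpace ℝ (Fin n) => z + x) '' S) ∩ B).ncard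
          - ((S ∩ ((fun x : EuclideanSpace ℝ (Fin n) => z + x) '' S)) ∩ B).ncard := by
      rw [hU]
      have := congrArg (fun m : ℕ => (m : ℝ)) n1
      push_cast at this
      linarith
    have e2 : (((Γ ∩ B) \ ((S ∪ (fun x : EuclideanSpace ℝ (Fin n) => z + x) '' S) ∩ B)).ncard : ℝ)
        = ((Γ ∩ B).ncard : ℝ) - (((S ∪ (fun x : EuclideanSpace ℝ (Fin n) => z + x) '' S) ∩ B).ncard : ℝ) := by
      rw [← hU] at n2
      have := congrArg (fun m : ℕ => (m : ℝ)) n2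
      push_cast at this
      linarith
    rw [e2, e1]
    ring
  · -- degenerate case : z not in the lattice, both autocorrelation sets are empty
    have hempty : ∀ T : Set (EuclideanSpace ℝ (Fin n)), T ⊆ Γ → T ∩ ((fun x : EuclideanSpace ℝ (Fin n) => z + x) '' T) = ∅ := by
      intro T hT
      ext x
      simp only [Set.mem_inter_iff, Set.mem_image, Set.mem_empty_iff_false, iff_false, not_and]
      rintro hxT ⟨y, hyT, rfl⟩
      apply hz
      have h1 : z + y ∈ Γ := hT hxT
      have h2 : y ∈ Γ := hT hyT
      have := Submodule.sub_mem L (SetLike.mem_coe.mp h1) (SetLike.mem_coe.mp h2)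
      exact SetLike.mem_coe.mpr (by simpa using this)
    have hν0 : ν z = 0 := by
      have h1 := hν z
      rw [hempty S hS] at h1
      rw [densTo_iff] at h1
      have h2 : Tendsto (fun r : ℝ => (((∅ : Set (EuclideanSpace ℝ (Fin n))) ∩ ball (0 : EuclideanSpace ℝ (Fin n)) r).ncard : ℝ) / V n r)
          atTop (nhds 0) := by
        simp only [Set.empty_inter, Set.ncard_empty, Nat.cast_zero, zero_div]
        exact tendsto_const_nhds
      exact tendsto_nhds_unique h1 h2
    rw [hempty (Γ \ S) Set.diff_subset, hν0, densTo_iff]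
    simp only [Set.empty_inter, Set.ncard_empty, Nat.cast_zero, zero_div]
    exact tendsto_const_nhds
end

section
/- Let Γ be a lattice in ℝⁿ and a ∈ ℝⁿ. Then the limit lim_{r→∞} |Γ ∩ B_r(a)| / vol(B_r(0)) exists, equals dens(Γ), and the convergence is uniform in a. -/
open MeasureTheory Metric Filter

open scoped Pointwise ENNReal
open Submodule Topology

section Aux

variable {n : ℕ} (b : Module.Basis (Fin n) ℝ (EuclideanSpace ℝ (Fin n)))

lemma aux_disj {γ₁ γ₂ : EuclideanSpace ℝ (Fin n)}
    (h₁ : γ₁ ∈ span ℤ (Set.range b)) (h₂ : γ₂ ∈ span ℤ (Set.range b))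
    (h : ¬ Disjoint (γ₁ +ᵥ ZSpan.fundamentalDomain b) (γ₂ +ᵥ ZSpan.fundamentalDomain b)) :
    γ₁ = γ₂ := by
  rw [Set.not_disjoint_iff] at h
  obtain ⟨x, hx₁, hx₂⟩ := h
  rw [Set.mem_vadd_set_iff_neg_vadd_mem] at hx₁ hx₂
  obtain ⟨v, hv, huniq⟩ := ZSpan.exist_unique_vadd_mem_fundamentalDomain b x
  have e₁ := huniq ⟨-γ₁, neg_mem h₁⟩ hx₁
  have e₂ := huniq ⟨-γ₂, neg_mem h₂⟩ hx₂
  have e := e₁.trans e₂.symm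
  have : (-γ₁ : EuclideanSpace ℝ (Fin n)) = -γ₂ := congrArg Subtype.val e
  simpa [neg_inj] using this

lemma aux_finite (a : EuclideanSpace ℝ (Fin n)) (r : ℝ) :
    (((span ℤ (Set.range b) : Submodule ℤ _) : Set (EuclideanSpace ℝ (Fin n))) ∩ ball a r).Finite := by
  have hclosed : IsClosed ((span ℤ (Set.range b) : Submodule ℤ _) :
      Set (EuclideanSpace ℝ (Fin n))) :=
    AddSubgroup.isClosed_of_discrete (H := (span ℤ (Set.range b)).toAddSubgroup)
  have hC : IsCompact ((((span ℤ (Set.range b) : Submodule ℤ _)) :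
      Set (EuclideanSpace ℝ (Fin n))) ∩ closedBall a r) :=
    (isCompact_closedBall a r).inter_left hclosed
  have hdisc : DiscreteTopology ((((span ℤ (Set.range b) : Submodule ℤ _)) :
      Set (EuclideanSpace ℝ (Fin n))) ∩ closedBall a r : Set _) := by
    refine DiscreteTopology.of_subset ?_ Set.inter_subset_left
    exact inferInstanceAs (DiscreteTopology (span ℤ (Set.range b)))
  exact (hC.finite (isDiscrete_iff_discreteTopology.mpr hdisc)).subset (Set.inter_subset_inter_right _ ball_subset_closedBall)

lemma aux_count {d : ℝ}
    (hd : ZSpan.fundamentalDomain b ⊆ closedBall 0 d)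
    (a : EuclideanSpace ℝ (Fin n)) (r : ℝ) :
    volume (ball (0 : EuclideanSpace ℝ (Fin n)) (r - d))
      ≤ (Nat.card ↥(((span ℤ (Set.range b) : Submodule ℤ _) : Set (EuclideanSpace ℝ (Fin n)))
          ∩ ball a r)) * volume (ZSpan.fundamentalDomain b)
    ∧ (Nat.card ↥(((span ℤ (Set.range b) : Submodule ℤ _) : Set (EuclideanSpace ℝ (Fin n)))
          ∩ ball a r)) * volume (ZSpan.fundamentalDomain b)
      ≤ volume (ball (0 : EuclideanSpace ℝ (Fin n)) (r + d)) := by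
  classical
  set D := ZSpan.fundamentalDomain b with hD
  set S := (((span ℤ (Set.range b) : Submodule ℤ _) : Set (EuclideanSpace ℝ (Fin n)))
      ∩ ball a r) with hS
  have hfin : S.Finite := aux_finite b a r
  set F := hfin.toFinset with hF
  have hcard : (Nat.card ↥S : ℝ≥0∞) = (F.card : ℝ≥0∞) := by
    rw [Nat.card_coe_set_eq, Set.ncard_eq_toFinset_card _ hfin]
  have hkey : volume (⋃ γ ∈ F, γ +ᵥ D) = (F.card : ℝ≥0∞) * volume D := by
    rw [measure_biUnion_finset]
    · simp [measure_vadd, Finset.sum_const, nsmul_eq_mul]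
    · intro γ₁ h₁ γ₂ h₂ hne
      by_contra hcon
      exact hne (aux_disj b
        ((hfin.mem_toFinset.mp h₁).1) ((hfin.mem_toFinset.mp h₂).1) hcon)
    · intro γ hγ
      exact (ZSpan.fundamentalDomain_measurableSet b).const_vadd γ
  constructor
  · calc volume (ball (0 : EuclideanSpace ℝ (Fin n)) (r - d))
        = volume (ball a (r - d)) := (Measure.addHaar_ball_center volume a _).symm
      _ ≤ volume (⋃ γ ∈ F, γ +ᵥ D) := by
          apply measure_mono
          intro x hx
          obtain ⟨v, hv, -⟩ := ZSpan.exist_unique_vadd_mem_fundamentalDomain b x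
          have hvD : (v : EuclideanSpace ℝ (Fin n)) + x ∈ D := hv
          have hγΓ : -(v : EuclideanSpace ℝ (Fin n)) ∈ span ℤ (Set.range b) := neg_mem v.2
          have hnorm : ‖(v : EuclideanSpace ℝ (Fin n)) + x‖ ≤ d := by
            simpa [dist_eq_norm] using mem_closedBall.mp (hd hvD)
          have hγball : -(v : EuclideanSpace ℝ (Fin n)) ∈ ball a r := by
            rw [mem_ball, dist_eq_norm]
            have hxa : ‖x - a‖ < r - d := by
              simpa [dist_eq_norm] using mem_ball.mp hx
            calc ‖-(v : EuclideanSpace ℝ (Fin n)) - a‖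
                = ‖(x - a) - ((v : EuclideanSpace ℝ (Fin n)) + x)‖ := by congr 1; abel
              _ ≤ ‖x - a‖ + ‖(v : EuclideanSpace ℝ (Fin n)) + x‖ := norm_sub_le _ _
              _ < (r - d) + d := by linarith [hnorm, hxa]
              _ = r := by ring
          refine Set.mem_biUnion (hfin.mem_toFinset.mpr ⟨hγΓ, hγball⟩) ?_
          rw [Set.mem_vadd_set_iff_neg_vadd_mem]
          simpa using hvD
      _ = (F.card : ℝ≥0∞) * volume D := hkey
      _ = (Nat.card ↥S : ℝ≥0∞) * volume D := by rw [hcard]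
  · calc (Nat.card ↥S : ℝ≥0∞) * volume D = volume (⋃ γ ∈ F, γ +ᵥ D) := by rw [hkey, hcard]
      _ ≤ volume (ball a (r + d)) := by
          apply measure_mono
          intro x hx
          simp only [Set.mem_iUnion] at hx
          obtain ⟨γ, hγ, hxγ⟩ := hx
          obtain ⟨hγΓ, hγball⟩ := hfin.mem_toFinset.mp hγ
          rw [Set.mem_vadd_set_iff_neg_vadd_mem] at hxγ
          have hnorm : ‖-γ + x‖ ≤ d := by
            simpa [dist_eq_norm] using mem_closedBall.mp (hd hxγ)
          rw [mem_ball, dist_eq_norm]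
          have hγa : ‖γ - a‖ < r := by simpa [dist_eq_norm] using mem_ball.mp hγball
          calc ‖x - a‖ = ‖(γ - a) + (-γ + x)‖ := by congr 1; abel
            _ ≤ ‖γ - a‖ + ‖-γ + x‖ := norm_add_le _ _
            _ < r + d := by linarith
      _ = volume (ball (0 : EuclideanSpace ℝ (Fin n)) (r + d)) :=
          Measure.addHaar_ball_center volume a _

end Aux

/-- For a lattice `Γ` in `ℝⁿ`, the limit `lim_{r→∞} |Γ ∩ B_r(a)| / vol(B_r(0))`
exists, equals `dens(Γ)` (the reciprocal of the covolume), and the convergence is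
uniform in the center `a`. -/
theorem lattice_density_uniform {n : ℕ}
    (b : Module.Basis (Fin n) ℝ (EuclideanSpace ℝ (Fin n)))
    (Γ : Set (EuclideanSpace ℝ (Fin n)))
    (hΓ : Γ = (Submodule.span ℤ (Set.range b) : Submodule ℤ (EuclideanSpace ℝ (Fin n)))) :
    TendstoUniformly
      (fun (r : ℝ) (a : EuclideanSpace ℝ (Fin n)) =>
        (Nat.card ↥(Γ ∩ ball a r) : ℝ) /
          (volume (ball (0 : EuclideanSpace ℝ (Fin n)) r)).toReal)
      (fun _ => 1 / (volume (ZSpan.fundamentalDomain b)).toReal)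
      atTop := by
  subst hΓ
  obtain ⟨d, hd⟩ := (ZSpan.fundamentalDomain_isBounded b).subset_closedBall 0
  have h0D : (0 : EuclideanSpace ℝ (Fin n)) ∈ ZSpan.fundamentalDomain b := by
    have h := ZSpan.fract_mem_fundamentalDomain b 0
    rwa [ZSpan.fract_apply, ZSpan.floor_eq_self_of_mem b 0 (zero_mem _), sub_zero] at h
  have hd0 : 0 ≤ d := by simpa using mem_closedBall.mp (hd h0D)
  set V : ℝ := (volume (ZSpan.fundamentalDomain b)).toReal with hVdef
  have hDne : volume (ZSpan.fundamentalDomain b) ≠ 0 :=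
    ZSpan.measure_fundamentalDomain_ne_zero b
  have hDfin : volume (ZSpan.fundamentalDomain b) ≠ ⊤ :=
    ((ZSpan.fundamentalDomain_isBounded b).measure_lt_top).ne
  have hV : 0 < V := ENNReal.toReal_pos hDne hDfin
  set B : ℝ → ℝ := fun s => (volume (ball (0 : EuclideanSpace ℝ (Fin n)) s)).toReal with hBdef
  have hBpos : ∀ s : ℝ, 0 < s → 0 < B s := fun s hs =>
    ENNReal.toReal_pos (measure_ball_pos volume 0 hs).ne' measure_ball_lt_top.ne
  have hB1 : 0 < (volume (ball (0 : EuclideanSpace ℝ (Fin n)) 1)).toReal := hBpos 1 one_pos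
  have hBform : ∀ s : ℝ, 0 < s →
      B s = s ^ n * (volume (ball (0 : EuclideanSpace ℝ (Fin n)) 1)).toReal := by
    intro s hs
    show (volume (ball (0 : EuclideanSpace ℝ (Fin n)) s)).toReal = _
    rw [Measure.addHaar_ball_of_pos volume 0 hs, ENNReal.toReal_mul,
      ENNReal.toReal_ofReal (by positivity), finrank_euclideanSpace_fin]
  -- the limit of the comparison functions
  have claimA : ∀ c : ℝ, Tendsto (fun r : ℝ => B (r + c) / (V * B r)) atTop (𝓝 (1 / V)) := by
    intro c
    have h2 : Tendsto (fun r : ℝ => 1 + c * r⁻¹) atTop (𝓝 1) := by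
      simpa using (tendsto_const_nhds (X := ℝ) (f := atTop) (x := (1:ℝ))).add
        (Tendsto.const_mul c tendsto_inv_atTop_zero)
    have h3 : Tendsto (fun r : ℝ => (1 + c * r⁻¹) ^ n / V) atTop (𝓝 (1 / V)) := by
      simpa using (h2.pow n).div_const V
    refine Tendsto.congr' ?_ h3
    filter_upwards [eventually_gt_atTop 0, eventually_gt_atTop (-c)] with r hr hrc
    have hrcpos : 0 < r + c := by linarith
    rw [hBform _ hrcpos, hBform _ hr]
    have hrne : r ≠ 0 := hr.ne'
    field_simp
    rw [← mul_pow, div_mul_cancel₀ _ hrne]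
  rw [Metric.tendstoUniformly_iff]
  intro ε hε
  have hLev : ∀ᶠ r in atTop, |B (r + -d) / (V * B r) - 1 / V| < ε := by
    have := (claimA (-d)) (Metric.ball_mem_nhds _ hε)
    simpa [Real.dist_eq] using this
  have hUev : ∀ᶠ r in atTop, |B (r + d) / (V * B r) - 1 / V| < ε := by
    have := (claimA d) (Metric.ball_mem_nhds _ hε)
    simpa [Real.dist_eq] using this
  filter_upwards [hLev, hUev, eventually_gt_atTop 0] with r hL hU hr
  intro a
  set N : ℕ := Nat.card ↥((↑(span ℤ (Set.range ⇑b)) : Set (EuclideanSpace ℝ (Fin n)))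
      ∩ ball a r) with hN
  have hBr : 0 < B r := hBpos r hr
  obtain ⟨hlow, hup⟩ := aux_count b hd a r
  have hup' : (N : ℝ) * V ≤ B (r + d) := by
    have h := ENNReal.toReal_mono measure_ball_lt_top.ne hup
    simpa [ENNReal.toReal_mul, -Nat.card_coe_set_eq] using h
  have hlow' : B (r + -d) ≤ (N : ℝ) * V := by
    have hfin : ((N : ℝ≥0∞) * volume (ZSpan.fundamentalDomain b)) ≠ ⊤ :=
      ENNReal.mul_ne_top (ENNReal.natCast_ne_top N) hDfin
    have h := ENNReal.toReal_mono hfin hlow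
    rw [← sub_eq_add_neg]
    simpa [ENNReal.toReal_mul, -Nat.card_coe_set_eq] using h
  have hFub : (N : ℝ) / B r ≤ B (r + d) / (V * B r) := by
    rw [div_le_div_iff₀ hBr (by positivity)]
    nlinarith [mul_le_mul_of_nonneg_right hup' hBr.le]
  have hFlb : B (r + -d) / (V * B r) ≤ (N : ℝ) / B r := by
    rw [div_le_div_iff₀ (by positivity) hBr]
    nlinarith [mul_le_mul_of_nonneg_right hlow' hBr.le]
  rw [Real.dist_eq]
  rw [abs_sub_lt_iff] at hL hU ⊢
  constructor
  · linarith [hL.1, hL.2, hFlb]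
  · linarith [hU.1, hU.2, hFub]
end

section
/- Let Γ be a lattice in ℝⁿ, S ⊆ Γ with existing autocorrelation coefficients, and S' = Γ \ S. Then the autocorrelation measures satisfy γ_{S'} = γ_S + (dens(S') − dens(S)) · δ_Γ, where δ_Γ = Σ_{t∈Γ} δ_t and γ_S = Σ_{t∈Γ} ν_S(t) δ_t. -/
open MeasureTheory Filter Metric

lemma densTo_nonneg {n : ℕ} {A : Set (EuclideanSpace ℝ (Fin n))} {d : ℝ}
    (h : DensTo A d) : 0 ≤ d :=
  ge_of_tendsto' h (fun r => by positivity)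

lemma vol_ratio_tendsto {n : ℕ} [Nontrivial (EuclideanSpace ℝ (Fin n))] (a : ℝ) :
    Tendsto (fun r : ℝ =>
      (volume (ball (0 : EuclideanSpace ℝ (Fin n)) (r + a))).toReal /
        (volume (ball (0 : EuclideanSpace ℝ (Fin n)) r)).toReal) atTop (nhds 1) := by
  have hK0 : (volume (ball (0 : EuclideanSpace ℝ (Fin n)) 1)).toReal ≠ 0 :=
    (ENNReal.toReal_pos (measure_ball_pos _ _ one_pos).ne' measure_ball_lt_top.ne).ne'
  have h1 : Tendsto (fun r : ℝ => ((r + a) / r) ^ n) atTop (nhds 1) := by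
    have hq : Tendsto (fun r : ℝ => (r + a) / r) atTop (nhds 1) := by
      have h2 : Tendsto (fun r : ℝ => 1 + a * r⁻¹) atTop (nhds (1 + a * 0)) :=
        tendsto_const_nhds.add (tendsto_inv_atTop_zero.const_mul a)
      rw [mul_zero, add_zero] at h2
      refine h2.congr' ?_
      filter_upwards [eventually_gt_atTop 0] with r hr
      field_simp
    simpa using hq.pow n
  refine h1.congr' ?_
  filter_upwards [eventually_ge_atTop (1 + |a|)] with r hr
  have hr0 : 0 < r := by
    have := abs_nonneg a; linarith
  have hra : 0 ≤ r + a := by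
    have := neg_abs_le a; linarith
  rw [Measure.addHaar_ball volume 0 hra, Measure.addHaar_ball volume 0 hr0.le,
      finrank_euclideanSpace_fin, ENNReal.toReal_mul, ENNReal.toReal_mul,
      ENNReal.toReal_ofReal (by positivity), ENNReal.toReal_ofReal (by positivity),
      mul_div_mul_right _ _ hK0, div_pow]

set_option maxHeartbeats 1000000 in
lemma densTo_translate {n : ℕ} {A : Set (EuclideanSpace ℝ (Fin n))} {d : ℝ}
    (v : EuclideanSpace ℝ (Fin n))
    (hfin : ∀ r : ℝ, (A ∩ ball 0 r).Finite) (h : DensTo A d) :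
    DensTo ((fun x => v + x) '' A) d := by
  rcases subsingleton_or_nontrivial (EuclideanSpace ℝ (Fin n)) with hsub | hnon
  · have hv : v = 0 := Subsingleton.elim v 0
    subst hv
    have himg : (fun x => (0 : EuclideanSpace ℝ (Fin n)) + x) '' A = A := by
      ext y; simp
    rw [himg]
    exact h
  · set c := ‖v‖ with hc
    have hinj : Function.Injective (fun x : EuclideanSpace ℝ (Fin n) => v + x) :=
      fun x y hxy => by simpa using hxy
    have incl1 : ∀ r : ℝ, (fun x => v + x) '' (A ∩ ball 0 (r - c)) ⊆
        ((fun x => v + x) '' A) ∩ ball 0 r := by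
      rintro r y ⟨x, ⟨hxA, hx⟩, rfl⟩
      refine ⟨⟨x, hxA, rfl⟩, ?_⟩
      rw [mem_ball_zero_iff] at hx ⊢
      calc ‖v + x‖ ≤ ‖v‖ + ‖x‖ := norm_add_le _ _
        _ < r := by rw [← hc]; linarith
    have incl2 : ∀ r : ℝ, ((fun x => v + x) '' A) ∩ ball 0 r ⊆
        (fun x => v + x) '' (A ∩ ball 0 (r + c)) := by
      rintro r y ⟨⟨x, hxA, rfl⟩, hy⟩
      refine ⟨x, ⟨hxA, ?_⟩, rfl⟩
      rw [mem_ball_zero_iff] at hy ⊢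
      have hx : ‖x‖ = ‖v + x - v‖ := by rw [add_sub_cancel_left]
      calc ‖x‖ = ‖v + x - v‖ := hx
        _ ≤ ‖v + x‖ + ‖v‖ := norm_sub_le _ _
        _ < r + c := by rw [← hc]; linarith
    have hfin2 : ∀ r : ℝ, (((fun x => v + x) '' A) ∩ ball 0 r).Finite :=
      fun r => (((hfin (r + c)).image _).subset (incl2 r))
    have cardUB : ∀ r : ℝ,
        (Nat.card (((fun x => v + x) '' A) ∩ ball 0 r :
          Set (EuclideanSpace ℝ (Fin n))) : ℝ) ≤
        Nat.card (A ∩ ball 0 (r + c) : Set (EuclideanSpace ℝ (Fin n))) := by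
      intro r
      have h1 := Nat.card_mono ((hfin (r + c)).image (fun x => v + x)) (incl2 r)
      rw [Nat.card_image_of_injective hinj] at h1
      exact_mod_cast h1
    have cardLB : ∀ r : ℝ,
        (Nat.card (A ∩ ball 0 (r - c) : Set (EuclideanSpace ℝ (Fin n))) : ℝ) ≤
        Nat.card (((fun x => v + x) '' A) ∩ ball 0 r :
          Set (EuclideanSpace ℝ (Fin n))) := by
      intro r
      have h1 := Nat.card_mono (hfin2 r) (incl1 r)
      rw [Nat.card_image_of_injective hinj] at h1
      exact_mod_cast h1
    have hLshift : Tendsto (fun r : ℝ =>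
        (Nat.card (A ∩ ball 0 (r - c) : Set (EuclideanSpace ℝ (Fin n))) : ℝ) /
          (volume (ball (0 : EuclideanSpace ℝ (Fin n)) (r - c))).toReal)
        atTop (nhds d) := by
      have h1 := h.comp (tendsto_atTop_add_const_right atTop (-c) tendsto_id)
      simpa [sub_eq_add_neg, Function.comp_def] using h1
    have hUshift : Tendsto (fun r : ℝ =>
        (Nat.card (A ∩ ball 0 (r + c) : Set (EuclideanSpace ℝ (Fin n))) : ℝ) /
          (volume (ball (0 : EuclideanSpace ℝ (Fin n)) (r + c))).toReal)
        atTop (nhds d) := by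
      have h1 := h.comp (tendsto_atTop_add_const_right atTop c tendsto_id)
      simpa [Function.comp_def] using h1
    have hlow : Tendsto (fun r : ℝ =>
        (Nat.card (A ∩ ball 0 (r - c) : Set (EuclideanSpace ℝ (Fin n))) : ℝ) /
          (volume (ball (0 : EuclideanSpace ℝ (Fin n)) r)).toReal) atTop (nhds d) := by
      have hprod := hLshift.mul (by simpa [← sub_eq_add_neg] using vol_ratio_tendsto (n := n) (-c))
      rw [mul_one] at hprod
      refine hprod.congr' ?_
      filter_upwards [eventually_ge_atTop (c + 1)] with r hr
      have hpos : (volume (ball (0 : EuclideanSpace ℝ (Fin n)) (r - c))).toReal ≠ 0 :=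
        (ENNReal.toReal_pos (measure_ball_pos _ _ (by linarith : (0:ℝ) < r - c)).ne'
          measure_ball_lt_top.ne).ne'
      rw [div_mul_div_cancel₀ hpos]
    have hup : Tendsto (fun r : ℝ =>
        (Nat.card (A ∩ ball 0 (r + c) : Set (EuclideanSpace ℝ (Fin n))) : ℝ) /
          (volume (ball (0 : EuclideanSpace ℝ (Fin n)) r)).toReal) atTop (nhds d) := by
      have hprod := hUshift.mul (vol_ratio_tendsto (n := n) c)
      rw [mul_one] at hprod
      refine hprod.congr' ?_
      filter_upwards [eventually_ge_atTop 1] with r hr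
      have hpos : (volume (ball (0 : EuclideanSpace ℝ (Fin n)) (r + c))).toReal ≠ 0 :=
        (ENNReal.toReal_pos (measure_ball_pos _ _
          (by have : (0:ℝ) ≤ c := norm_nonneg v; linarith : (0:ℝ) < r + c)).ne'
          measure_ball_lt_top.ne).ne'
      rw [div_mul_div_cancel₀ hpos]
    unfold DensTo
    refine tendsto_of_tendsto_of_tendsto_of_le_of_le' hlow hup ?_ ?_
    · filter_upwards [eventually_ge_atTop 1] with r hr
      have hv : (0:ℝ) ≤ (volume (ball (0 : EuclideanSpace ℝ (Fin n)) r)).toReal :=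
        ENNReal.toReal_nonneg
      exact div_le_div_of_nonneg_right (cardLB r) hv
    · filter_upwards [eventually_ge_atTop 1] with r hr
      have hv : (0:ℝ) ≤ (volume (ball (0 : EuclideanSpace ℝ (Fin n)) r)).toReal :=
        ENNReal.toReal_nonneg
      exact div_le_div_of_nonneg_right (cardUB r) hv

set_option maxHeartbeats 1000000 in
/-- The autocorrelation measures of a lattice subset `S ⊆ Γ` and of its complement
`S' = Γ \ S` satisfy `γ_{S'} = γ_S + (dens(S') − dens(S)) · δ_Γ`, stated in the
rearranged (positive-measure) form
`γ_{S'} + dens(S) · δ_Γ = γ_S + dens(S') · δ_Γ`, where `γ_S = Σ_{t∈Γ} ν_S(t) δ_t`,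
`δ_Γ = Σ_{t∈Γ} δ_t`, `dens(S) = ν_S(0)` and `dens(S') = dens(Γ) − dens(S)`. -/
theorem complement_autocorrelation_measure {n : ℕ}
    (b : Module.Basis (Fin n) ℝ (EuclideanSpace ℝ (Fin n)))
    (Γ : Set (EuclideanSpace ℝ (Fin n)))
    (hΓ : Γ = (Submodule.span ℤ (Set.range b) : Submodule ℤ (EuclideanSpace ℝ (Fin n))))
    (S : Set (EuclideanSpace ℝ (Fin n))) (hS : S ⊆ Γ)
    (ν ν' : EuclideanSpace ℝ (Fin n) → ℝ)
    (hν : ∀ z, DensTo (S ∩ ((fun x => z + x) '' S)) (ν z))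
    (hν' : ∀ z, DensTo ((Γ \ S) ∩ ((fun x => z + x) '' (Γ \ S))) (ν' z))
    (dΓ : ℝ) (hdΓ : DensTo Γ dΓ) :
    (Measure.sum fun t : ↥Γ => ENNReal.ofReal (ν' (t : EuclideanSpace ℝ (Fin n))) •
        Measure.dirac (t : EuclideanSpace ℝ (Fin n)))
      + ENNReal.ofReal (ν 0) •
        (Measure.sum fun t : ↥Γ => Measure.dirac (t : EuclideanSpace ℝ (Fin n)))
    = (Measure.sum fun t : ↥Γ => ENNReal.ofReal (ν (t : EuclideanSpace ℝ (Fin n))) •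
        Measure.dirac (t : EuclideanSpace ℝ (Fin n)))
      + ENNReal.ofReal (dΓ - ν 0) •
        (Measure.sum fun t : ↥Γ => Measure.dirac (t : EuclideanSpace ℝ (Fin n))) := by
  classical
  -- finiteness of Γ within balls
  have hΓfin : ∀ r : ℝ, (Γ ∩ ball 0 r).Finite := by
    intro r
    rw [hΓ]
    haveI : DiscreteTopology
        ((Submodule.span ℤ (Set.range b) :
          Submodule ℤ (EuclideanSpace ℝ (Fin n))) : Set (EuclideanSpace ℝ (Fin n))) :=
      inferInstanceAs (DiscreteTopology (Submodule.span ℤ (Set.range b)))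
    have hclosed : IsClosed
        ((Submodule.span ℤ (Set.range b) :
          Submodule ℤ (EuclideanSpace ℝ (Fin n))) : Set (EuclideanSpace ℝ (Fin n))) :=
      AddSubgroup.isClosed_of_discrete (H := (Submodule.span ℤ (Set.range b)).toAddSubgroup)
    have h1 := Metric.finite_isBounded_inter_isClosed DiscreteTopology.isDiscrete
      (isBounded_ball (x := (0 : EuclideanSpace ℝ (Fin n))) (r := r)) hclosed
    simpa [Set.inter_comm] using h1
  have h0Γ : (0 : EuclideanSpace ℝ (Fin n)) ∈ Γ := by
    rw [hΓ]; exact Submodule.zero_mem _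
  have hΓim : ∀ t ∈ Γ, (fun x => t + x) '' Γ = Γ := by
    intro t ht
    rw [hΓ] at ht ⊢
    ext y
    simp only [Set.mem_image, SetLike.mem_coe] at *
    constructor
    · rintro ⟨x, hx, rfl⟩; exact add_mem ht hx
    · intro hy; exact ⟨y - t, sub_mem hy ht, by abel⟩
  have hν0S : DensTo S (ν 0) := by
    have h1 := hν 0
    have himg : (fun x => (0 : EuclideanSpace ℝ (Fin n)) + x) '' S = S := by ext y; simp
    rw [himg, Set.inter_self] at h1
    exact h1
  have hν'0 : DensTo (Γ \ S) (ν' 0) := by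
    have h1 := hν' 0
    have himg : (fun x => (0 : EuclideanSpace ℝ (Fin n)) + x) '' (Γ \ S) = Γ \ S := by
      ext y; simp
    rw [himg, Set.inter_self] at h1
    exact h1
  have hSfin : ∀ r : ℝ, (S ∩ ball 0 r).Finite :=
    fun r => (hΓfin r).subset (Set.inter_subset_inter_left _ hS)
  -- the key pointwise identity
  have hkey : ∀ t ∈ Γ, ν' t = dΓ - ν 0 - ν 0 + ν t := by
    intro t ht
    set T := (fun x => t + x) '' S with hT
    have hTΓ : T ⊆ Γ := by
      rw [← hΓim t ht]; exact Set.image_mono hS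
    have hinj : Function.Injective (fun x : EuclideanSpace ℝ (Fin n) => t + x) :=
      fun a b hab => by simpa using hab
    have himdiff : (fun x => t + x) '' (Γ \ S) = Γ \ T := by
      rw [Set.image_diff hinj, hΓim t ht]
    have hsetEq : (Γ \ S) ∩ ((fun x => t + x) '' (Γ \ S)) = Γ \ (S ∪ T) := by
      rw [himdiff]
      ext y
      simp only [Set.mem_inter_iff, Set.mem_diff, Set.mem_union]
      tauto
    have hνT : DensTo T (ν 0) := densTo_translate t hSfin hν0S
    have hcount : ∀ r : ℝ,
        (Nat.card ((Γ \ (S ∪ T)) ∩ ball 0 r : Set (EuclideanSpace ℝ (Fin n))) : ℝ)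
        = (Nat.card (Γ ∩ ball 0 r : Set (EuclideanSpace ℝ (Fin n))) : ℝ)
          - (Nat.card (S ∩ ball 0 r : Set (EuclideanSpace ℝ (Fin n))) : ℝ)
          - (Nat.card (T ∩ ball 0 r : Set (EuclideanSpace ℝ (Fin n))) : ℝ)
          + (Nat.card ((S ∩ T) ∩ ball 0 r : Set (EuclideanSpace ℝ (Fin n))) : ℝ) := by
      intro r
      have hGfin := hΓfin r
      have hSb : (S ∩ ball 0 r) ⊆ Γ ∩ ball 0 r := Set.inter_subset_inter_left _ hS
      have hTb : (T ∩ ball 0 r) ⊆ Γ ∩ ball 0 r := Set.inter_subset_inter_left _ hTΓ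
      have e1 : (Γ \ (S ∪ T)) ∩ ball 0 r
          = (Γ ∩ ball 0 r) \ ((S ∩ ball 0 r) ∪ (T ∩ ball 0 r)) := by
        ext y
        simp only [Set.mem_inter_iff, Set.mem_diff, Set.mem_union]
        tauto
      have e2 : (S ∩ ball 0 r) ∪ (T ∩ ball 0 r) ⊆ Γ ∩ ball 0 r := Set.union_subset hSb hTb
      have h3 := Set.ncard_diff_add_ncard_of_subset e2 hGfin
      have h4 := Set.ncard_union_add_ncard_inter (S ∩ ball 0 r) (T ∩ ball 0 r)
        (hGfin.subset hSb) (hGfin.subset hTb)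
      have e5 : (S ∩ ball 0 r) ∩ (T ∩ ball 0 r) = (S ∩ T) ∩ ball 0 r := by
        ext y
        simp only [Set.mem_inter_iff]
        tauto
      rw [e5] at h4
      rw [e1]
      simp only [Nat.card_coe_set_eq]
      have h3r : (((Γ ∩ ball 0 r) \ ((S ∩ ball 0 r) ∪ (T ∩ ball 0 r))).ncard : ℝ)
          + (((S ∩ ball 0 r) ∪ (T ∩ ball 0 r)).ncard : ℝ) = ((Γ ∩ ball 0 r).ncard : ℝ) := by
        exact_mod_cast congrArg (Nat.cast : ℕ → ℝ) h3
      have h4r : (((S ∩ ball 0 r) ∪ (T ∩ ball 0 r)).ncard : ℝ)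
          + (((S ∩ T) ∩ ball 0 r).ncard : ℝ)
          = ((S ∩ ball 0 r).ncard : ℝ) + ((T ∩ ball 0 r).ncard : ℝ) := by
        exact_mod_cast congrArg (Nat.cast : ℕ → ℝ) h4
      linarith
    have hcomb : Tendsto (fun r : ℝ =>
        (Nat.card ((Γ \ (S ∪ T)) ∩ ball 0 r : Set (EuclideanSpace ℝ (Fin n))) : ℝ) /
          (volume (ball (0 : EuclideanSpace ℝ (Fin n)) r)).toReal)
        atTop (nhds (dΓ - ν 0 - ν 0 + ν t)) := by
      have h5 : Tendsto (fun r : ℝ =>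
          ((Nat.card (Γ ∩ ball 0 r : Set (EuclideanSpace ℝ (Fin n))) : ℝ) /
              (volume (ball (0 : EuclideanSpace ℝ (Fin n)) r)).toReal
            - (Nat.card (S ∩ ball 0 r : Set (EuclideanSpace ℝ (Fin n))) : ℝ) /
              (volume (ball (0 : EuclideanSpace ℝ (Fin n)) r)).toReal)
            - (Nat.card (T ∩ ball 0 r : Set (EuclideanSpace ℝ (Fin n))) : ℝ) /
              (volume (ball (0 : EuclideanSpace ℝ (Fin n)) r)).toReal
            + (Nat.card ((S ∩ T) ∩ ball 0 r : Set (EuclideanSpace ℝ (Fin n))) : ℝ) /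
              (volume (ball (0 : EuclideanSpace ℝ (Fin n)) r)).toReal)
          atTop (nhds (dΓ - ν 0 - ν 0 + ν t)) :=
        Filter.Tendsto.add (Filter.Tendsto.sub (Filter.Tendsto.sub hdΓ hν0S) hνT) (hν t)
      refine h5.congr fun r => ?_
      rw [← sub_div, ← sub_div, ← add_div, ← hcount r]
    have hν'T : DensTo (Γ \ (S ∪ T)) (ν' t) := by
      have h6 := hν' t
      rw [hsetEq] at h6
      exact h6
    exact tendsto_nhds_unique hν'T hcomb
  -- nonnegativity facts
  have hν0nonneg : 0 ≤ ν 0 := densTo_nonneg hν0S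
  have hd'nonneg : 0 ≤ dΓ - ν 0 := by
    have h0 := hkey 0 h0Γ
    have h1 := densTo_nonneg hν'0
    linarith
  -- coefficient identity
  have key : ∀ t : ↥Γ,
      ENNReal.ofReal (ν' (t : EuclideanSpace ℝ (Fin n))) + ENNReal.ofReal (ν 0)
      = ENNReal.ofReal (ν (t : EuclideanSpace ℝ (Fin n))) + ENNReal.ofReal (dΓ - ν 0) := by
    intro t
    rw [← ENNReal.ofReal_add (densTo_nonneg (hν' t)) hν0nonneg,
        ← ENNReal.ofReal_add (densTo_nonneg (hν t)) hd'nonneg]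
    congr 1
    have h7 := hkey t t.2
    linarith
  ext s hs
  simp only [Measure.add_apply, Measure.smul_apply, Measure.sum_apply _ hs, smul_eq_mul]
  rw [← ENNReal.tsum_mul_left, ← ENNReal.tsum_mul_left, ← ENNReal.tsum_add, ← ENNReal.tsum_add]
  exact tsum_congr fun t => by rw [← add_mul, ← add_mul, key t]
end
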